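/- Let k and l be natural numbers and let 𝓗 = {H₁, H₂, …, H_m} be a collection of m pairwise distinct subsets of [k+l] = {1, 2, …, k+l}. If m > (k+l choose l), then at least one of the following holds: (1) the (k+1)-singleton matrix can be found in the subcollection of those sets of 𝓗 that have at most l elements; (2) the (l+1)-cosingleton matrix can be found in the subcollection of those sets of 𝓗 that have at least l+1 elements; (3) there exist indices i ≠ j such that H_j ⊆ H_i, |H_j| ≤ l, and |H_i| ≥ l+1. -/

import Mathlib

/-- A 0-1 matrix `N` (given as a `Prop`-valued matrix, `N i j` meaning entry 1)
with rows indexed by `Fin a` and columns by `Fin b` *can be found* in a collection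
of sets `𝓗` if there are `a` distinct sets of `𝓗` and `b` distinct elements of
`⋃₀ 𝓗` such that `N` is the incidence matrix of the sets over the elements. -/
def FoundIn {α : Type*} {a b : ℕ} (N : Fin a → Fin b → Prop) (𝓗 : Set (Set α)) : Prop :=
  ∃ (H : Fin a → Set α) (e : Fin b → α),
    Function.Injective H ∧ Function.Injective e ∧
    (∀ i, H i ∈ 𝓗) ∧ (∀ j, e j ∈ ⋃₀ 𝓗) ∧
    (∀ i j, e j ∈ H i ↔ N i j)

/-- The `n`-singleton matrix `Sⁿ`: `n+1` rows, `n` columns, entry 1 iff `i = j+1`. -/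
def singletonMatrix (n : ℕ) : Fin (n + 1) → Fin n → Prop :=
  fun i j => (i : ℕ) = (j : ℕ) + 1

/-- The `n`-cosingleton matrix `S̄ⁿ`: `n+1` rows, `n` columns, entry 0 iff `i = j`. -/
def cosingletonMatrix (n : ℕ) : Fin (n + 1) → Fin n → Prop :=
  fun i j => (i : ℕ) ≠ (j : ℕ)

/-- The `n`-monotone matrix `Mⁿ`: `n+1` rows, `n` columns, entry 1 iff `i ≥ j+1`. -/
def monotoneMatrix (n : ℕ) : Fin (n + 1) → Fin n → Prop :=
  fun i j => (j : ℕ) + 1 ≤ (i : ℕ)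


/-!
Split the family into the small sets (at most `l` elements) and the large ones. If neither
matrix can be found, Hall's theorem gives an injection `A ↦ f A ⊇ A` from the small sets into
the `l`-subsets of `[k+l]` and, applied to complements, an injection `B ↦ g B ⊆ B` from the large
sets into the `l`-subsets. If no small set lies in a large one the two images are disjoint, so
there are at most `(k+l).choose l` sets.

Hall's condition can only fail if some family `W` of sets of size at most `l` has fewer
`l`-supersets than members. Starting from an inclusion-minimal member `R` of size `< l`, either
every `z ∉ R` lies in a member inside `insert z R`, or some `z` does not, and then `R` can be
replaced by `insert z R` (or discarded, if that is an `l`-set) keeping a violator. The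
recursion ends with an `(l-1)`-set `Z` containing a member, such that each `e ∉ Z` lies in a
member inside `insert e Z`: a copy of the singleton matrix on the columns outside `Z`.
-/

open Finset

section FoundIn

variable {α : Type*} {a b : ℕ}

theorem foundIn_of_incidence {N : Fin a → Fin b → Prop} {𝓗 : Set (Set α)}
    (hN : Function.Injective N) (hcol : ∀ j, ∃ i, N i j)
    (H : Fin a → Set α) (e : Fin b → α) (he : Function.Injective e) (hH : ∀ i, H i ∈ 𝓗)
    (hinc : ∀ i j, e j ∈ H i ↔ N i j) : FoundIn N 𝓗 := by
  refine ⟨H, e, fun i i' h => hN ?_, he, hH, fun j => ?_, hinc⟩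
  · ext j
    rw [← hinc, ← hinc, h]
  · obtain ⟨i, hi⟩ := hcol j
    exact ⟨H i, hH i, (hinc i j).2 hi⟩

theorem singletonMatrix_injective (n : ℕ) : Function.Injective (singletonMatrix n) := by
  intro i i' h
  by_contra hne
  have hi := i.isLt
  have hi' := i'.isLt
  have := congrFun h ⟨max (i : ℕ) i' - 1, by omega⟩
  simp only [singletonMatrix, eq_iff_iff] at this
  have := Fin.val_ne_of_ne hne
  omega

theorem cosingletonMatrix_injective (n : ℕ) : Function.Injective (cosingletonMatrix n) := by
  intro i i' h
  by_contra hne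
  have hi := i.isLt
  have hi' := i'.isLt
  have := Fin.val_ne_of_ne hne
  have := congrFun h ⟨min (i : ℕ) i', by omega⟩
  simp only [cosingletonMatrix, eq_iff_iff] at this
  omega

end FoundIn

section SingletonFrame

variable {α : Type*} [DecidableEq α]

/-- A copy of the singleton matrix with columns `V \ Z`: a member of `W` avoiding all columns,
and for each column `e` a member of `W` meeting the columns exactly in `e`. -/
structure IsSingletonFrame (V Z : Finset α) (W : Finset (Finset α)) : Prop where
  exists_subset : ∃ R ∈ W, R ⊆ Z
  exists_mem_subset_insert : ∀ e ∈ V, e ∉ Z → ∃ C ∈ W, e ∈ C ∧ C ⊆ insert e Z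

namespace IsSingletonFrame

variable {V Z : Finset α} {W : Finset (Finset α)}

theorem mono {W' : Finset (Finset α)} (h : IsSingletonFrame V Z W) (hW : W ⊆ W') :
    IsSingletonFrame V Z W' where
  exists_subset := h.exists_subset.imp fun _ ⟨hR, hRZ⟩ => ⟨hW hR, hRZ⟩
  exists_mem_subset_insert e he heZ :=
    (h.exists_mem_subset_insert e he heZ).imp fun _ ⟨hC, hC'⟩ => ⟨hW hC, hC'⟩

theorem exists_fin_incidence {n : ℕ} (h : IsSingletonFrame V Z W) (hn : (V \ Z).card = n) :
    ∃ (R : Finset α) (C : Fin n → Finset α) (e : Fin n → α), Function.Injective e ∧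
      R ∈ W ∧ (∀ i, C i ∈ W) ∧ (∀ j, e j ∈ V ∧ e j ∉ R) ∧ ∀ i j, e j ∈ C i ↔ i = j := by
  obtain ⟨R, hRW, hRZ⟩ := h.exists_subset
  let e : Fin n → α := fun j => ((equivFinOfCardEq hn).symm j : α)
  have he : Function.Injective e := Subtype.val_injective.comp (Equiv.injective _)
  have heVZ : ∀ j, e j ∈ V \ Z := fun j => ((equivFinOfCardEq hn).symm j).2
  choose C hCW hCe hCZ using fun j =>
    h.exists_mem_subset_insert (e j) (mem_sdiff.1 (heVZ j)).1 (mem_sdiff.1 (heVZ j)).2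
  refine ⟨R, C, e, he, hRW, hCW, fun j => ⟨(mem_sdiff.1 (heVZ j)).1,
    fun hR => (mem_sdiff.1 (heVZ j)).2 (hRZ hR)⟩, fun i j => ⟨fun hj => ?_, ?_⟩⟩
  · rcases mem_insert.1 (hCZ i hj) with hji | hjZ
    · exact (he hji).symm
    · exact absurd hjZ (mem_sdiff.1 (heVZ j)).2
  · rintro rfl
    exact hCe i

theorem foundIn_singletonMatrix {n : ℕ} {𝓗 : Set (Set α)} (h : IsSingletonFrame V Z W)
    (hn : (V \ Z).card = n) (h𝓗 : ∀ A ∈ W, (A : Set α) ∈ 𝓗) :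
    FoundIn (singletonMatrix n) 𝓗 := by
  obtain ⟨R, C, e, he, hRW, hCW, heR, heC⟩ := h.exists_fin_incidence hn
  refine foundIn_of_incidence (singletonMatrix_injective n) (fun j => ⟨j.succ, rfl⟩)
    (Fin.cases (R : Set α) fun i => (C i : Set α)) e he
    (Fin.cases (h𝓗 R hRW) fun i => h𝓗 (C i) (hCW i)) fun i j => ?_
  cases i using Fin.cases with
  | zero => simp [singletonMatrix, (heR j).2]
  | succ i => simp [singletonMatrix, heC, Fin.ext_iff]

theorem foundIn_cosingletonMatrix {n : ℕ} {𝓗 : Set (Set α)} (h : IsSingletonFrame V Z W)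
    (hn : (V \ Z).card = n) (h𝓗 : ∀ A ∈ W, ((V \ A : Finset α) : Set α) ∈ 𝓗) :
    FoundIn (cosingletonMatrix n) 𝓗 := by
  obtain ⟨R, C, e, he, hRW, hCW, heR, heC⟩ := h.exists_fin_incidence hn
  refine foundIn_of_incidence (cosingletonMatrix_injective n)
    (fun j => ⟨Fin.last n, by simp [cosingletonMatrix, j.isLt.ne']⟩)
    (Fin.lastCases ((V \ R : Finset α) : Set α) fun i => ((V \ C i : Finset α) : Set α)) e he
    (fun i => ?_) fun i j => ?_
  · cases i using Fin.lastCases with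
    | last => simpa using h𝓗 R hRW
    | cast i => simpa using h𝓗 (C i) (hCW i)
  · cases i using Fin.lastCases with
    | last => simp [cosingletonMatrix, heR j, j.isLt.ne']
    | cast i => simp [cosingletonMatrix, heC, (heR j).1, Fin.ext_iff]

end IsSingletonFrame

end SingletonFrame

section HallViolator

variable {α : Type*} [DecidableEq α] {V R : Finset α} {l : ℕ} {W W' : Finset (Finset α)} {z : α}

def levelShade (V : Finset α) (l : ℕ) (W : Finset (Finset α)) : Finset (Finset α) :=
  {L ∈ V.powersetCard l | ∃ A ∈ W, A ⊆ L}

theorem mem_levelShade {L : Finset α} :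
    L ∈ levelShade V l W ↔ (L ⊆ V ∧ L.card = l) ∧ ∃ A ∈ W, A ⊆ L := by
  rw [levelShade, mem_filter, mem_powersetCard]

theorem levelShade_subset_of_forall_exists_subset (h : ∀ A ∈ W', ∃ B ∈ W, B ⊆ A) :
    levelShade V l W' ⊆ levelShade V l W := fun L hL => by
  obtain ⟨hLV, A, hA, hAL⟩ := mem_levelShade.1 hL
  obtain ⟨B, hB, hBA⟩ := h A hA
  exact mem_levelShade.2 ⟨hLV, B, hB, hBA.trans hAL⟩

structure IsHallViolator (V : Finset α) (l : ℕ) (W : Finset (Finset α)) : Prop where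
  subset : ∀ A ∈ W, A ⊆ V
  card_le : ∀ A ∈ W, A.card ≤ l
  card_levelShade_lt : (levelShade V l W).card < W.card

theorem not_subset_insert_of_mem_erase (hRmin : ∀ B ∈ W, B ⊆ R → B = R)
    (hz : ∀ C ∈ W, z ∈ C → ¬C ⊆ insert z R) {C : Finset α} (hC : C ∈ W.erase R) :
    ¬C ⊆ insert z R := fun hCz => by
  by_cases hzC : z ∈ C
  · exact hz C (mem_of_mem_erase hC) hzC hCz
  · exact ne_of_mem_erase hC (hRmin C (mem_of_mem_erase hC)
      ((subset_insert_iff_of_notMem hzC).1 hCz))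

namespace IsHallViolator

theorem exists_minimal (h : IsHallViolator V l W) :
    ∃ R ∈ W, R.card < l ∧ ∀ B ∈ W, B ⊆ R → B = R := by
  have hW : W.Nonempty := card_pos.1 (by have := h.card_levelShade_lt; omega)
  obtain ⟨R, hR, hRmin⟩ := W.exists_min_image card hW
  refine ⟨R, hR, ?_, fun B hB hBR => eq_of_subset_of_card_le hBR (hRmin B hB)⟩
  by_contra! hlR
  have : W ⊆ levelShade V l W := fun A hA => mem_levelShade.2
    ⟨⟨h.subset A hA, (h.card_le A hA).antisymm (hlR.trans (hRmin A hA))⟩, A, hA, Subset.rfl⟩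
  exact (card_le_card this).not_gt h.card_levelShade_lt

theorem erase (h : IsHallViolator V l W) (hR : R ∈ W) (hzV : z ∈ V) (hzR : z ∉ R)
    (hRl : R.card + 1 = l) (hfree : ∀ C ∈ W.erase R, ¬C ⊆ insert z R) :
    IsHallViolator V l (W.erase R) := by
  refine ⟨fun A hA => h.subset A (mem_of_mem_erase hA),
    fun A hA => h.card_le A (mem_of_mem_erase hA), ?_⟩
  -- `insert z R` lies in the shade of `W` but not in that of `W.erase R`
  have hshade : levelShade V l (W.erase R) ⊂ levelShade V l W := by
    refine (ssubset_iff_of_subset (levelShade_subset_of_forall_exists_subset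
      fun A hA => ⟨A, mem_of_mem_erase hA, Subset.rfl⟩)).2 ⟨insert z R, ?_, fun hz => ?_⟩
    · exact mem_levelShade.2 ⟨⟨insert_subset hzV (h.subset R hR),
        by rw [card_insert_of_notMem hzR, hRl]⟩, R, hR, subset_insert z R⟩
    · obtain ⟨-, C, hC, hCz⟩ := mem_levelShade.1 hz
      exact hfree C hC hCz
  have := card_lt_card hshade
  have := h.card_levelShade_lt
  have := card_erase_add_one hR
  omega

theorem insert_erase (h : IsHallViolator V l W) (hR : R ∈ W) (hzV : z ∈ V) (hzR : z ∉ R)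
    (hRl : R.card + 1 ≤ l) (hzW : insert z R ∉ W.erase R) :
    IsHallViolator V l (insert (insert z R) (W.erase R)) := by
  refine ⟨?_, ?_, ?_⟩
  · simp only [forall_mem_insert]
    exact ⟨insert_subset hzV (h.subset R hR), fun A hA => h.subset A (mem_of_mem_erase hA)⟩
  · simp only [forall_mem_insert]
    exact ⟨by rwa [card_insert_of_notMem hzR], fun A hA => h.card_le A (mem_of_mem_erase hA)⟩
  · have hshade : levelShade V l (insert (insert z R) (W.erase R)) ⊆ levelShade V l W := by
      refine levelShade_subset_of_forall_exists_subset ?_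
      simp only [forall_mem_insert]
      exact ⟨⟨R, hR, subset_insert z R⟩, fun A hA => ⟨A, mem_of_mem_erase hA, Subset.rfl⟩⟩
    rw [card_insert_of_notMem hzW, card_erase_add_one hR]
    exact (card_le_card hshade).trans_lt h.card_levelShade_lt

end IsHallViolator

end HallViolator

section SingletonFrameOfHallViolator

variable {α : Type*} [DecidableEq α] {V : Finset α} {l : ℕ}

/-- Keeping the witnesses away from `R` is what survives the replacement of `R` by
`insert z R` in the recursion. -/
theorem IsHallViolator.exists_frame_of_minimal (hl : l ≤ V.card + 1) {W : Finset (Finset α)}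
    {R : Finset α} (h : IsHallViolator V l W) (hR : R ∈ W) (hRmin : ∀ B ∈ W, B ⊆ R → B = R)
    (hRl : R.card < l) :
    ∃ Z ⊆ V, Z.card + 1 = l ∧ (∃ R₀ ∈ W, R₀ ⊆ Z) ∧
      ∀ e ∈ V, e ∉ Z → ∃ C ∈ W.erase R, e ∈ C ∧ C ⊆ insert e Z := by
  by_cases hframe : ∀ z ∈ V, z ∉ R → ∃ C ∈ W, z ∈ C ∧ C ⊆ insert z R
  · obtain ⟨Z, hRZ, hZV, hZ⟩ :=
      exists_subsuperset_card_eq (n := l - 1) (h.subset R hR) (by omega) (by omega)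
    refine ⟨Z, hZV, by omega, ⟨R, hR, hRZ⟩, fun e he heZ => ?_⟩
    obtain ⟨C, hC, heC, hCR⟩ := hframe e he fun heR => heZ (hRZ heR)
    exact ⟨C, mem_erase.2 ⟨fun hCeq => heZ (hRZ (hCeq ▸ heC)), hC⟩, heC,
      hCR.trans (insert_subset_insert e hRZ)⟩
  push Not at hframe
  obtain ⟨z, hzV, hzR, hz⟩ := hframe
  have hfree : ∀ C ∈ W.erase R, ¬C ⊆ insert z R := fun C hC =>
    not_subset_insert_of_mem_erase hRmin hz hC
  by_cases hRl' : R.card + 1 < l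
  · have hzW : insert z R ∉ W.erase R := fun hzW => hfree _ hzW Subset.rfl
    have hcard : (insert (insert z R) (W.erase R)).card = W.card := by
      rw [card_insert_of_notMem hzW, card_erase_add_one hR]
    have hzRcard : (insert z R).card = R.card + 1 := card_insert_of_notMem hzR
    obtain ⟨Z, hZV, hZ, ⟨R₀, hR₀, hR₀Z⟩, hwit⟩ :=
      (h.insert_erase hR hzV hzR hRl'.le hzW).exists_frame_of_minimal hl (mem_insert_self _ _)
        (fun B hB hBz => (mem_insert.1 hB).resolve_right fun hB' => hfree B hB' hBz)
        (by omega)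
    rw [erase_insert hzW] at hwit
    refine ⟨Z, hZV, hZ, ?_, hwit⟩
    rcases mem_insert.1 hR₀ with rfl | hR₀
    · exact ⟨R, hR, (subset_insert z R).trans hR₀Z⟩
    · exact ⟨R₀, mem_of_mem_erase hR₀, hR₀Z⟩
  · have h' := h.erase hR hzV hzR (by omega) hfree
    obtain ⟨R', hR', hR'l, hR'min⟩ := h'.exists_minimal
    obtain ⟨Z, hZV, hZ, ⟨R₀, hR₀, hR₀Z⟩, hwit⟩ := h'.exists_frame_of_minimal hl hR' hR'min hR'l
    exact ⟨Z, hZV, hZ, ⟨R₀, mem_of_mem_erase hR₀, hR₀Z⟩, fun e he heZ =>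
      (hwit e he heZ).imp fun C ⟨hC, hC'⟩ => ⟨mem_of_mem_erase hC, hC'⟩⟩
termination_by (W.card, l - R.card)
decreasing_by
  · exact Prod.lex_def.2 (Or.inr ⟨hcard, by omega⟩)
  · exact Prod.Lex.left _ _ (card_erase_lt_of_mem hR)

theorem IsHallViolator.exists_isSingletonFrame (hl : l ≤ V.card + 1) {W : Finset (Finset α)}
    (h : IsHallViolator V l W) : ∃ Z ⊆ V, Z.card + 1 = l ∧ IsSingletonFrame V Z W := by
  obtain ⟨R, hR, hRl, hRmin⟩ := h.exists_minimal
  obtain ⟨Z, hZV, hZ, hroot, hwit⟩ := h.exists_frame_of_minimal hl hR hRmin hRl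
  exact ⟨Z, hZV, hZ, hroot, fun e he heZ =>
    (hwit e he heZ).imp fun C ⟨hC, hC'⟩ => ⟨mem_of_mem_erase hC, hC'⟩⟩

end SingletonFrameOfHallViolator

section Counting

variable {α : Type*} [DecidableEq α] {V : Finset α} {l : ℕ}

theorem exists_injOn_superset_of_forall_not_isSingletonFrame (hl : l ≤ V.card + 1)
    {W : Finset (Finset α)} (hWV : ∀ A ∈ W, A ⊆ V) (hWl : ∀ A ∈ W, A.card ≤ l)
    (hno : ∀ Z ⊆ V, Z.card + 1 = l → ¬IsSingletonFrame V Z W) :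
    ∃ f : Finset α → Finset α, Set.InjOn f W ∧ ∀ A ∈ W, A ⊆ f A ∧ f A ∈ V.powersetCard l := by
  let t : W → Finset (Finset α) := fun A => {L ∈ V.powersetCard l | A.1 ⊆ L}
  have hall : ∀ s : Finset W, s.card ≤ (s.biUnion t).card := by
    intro s
    by_contra! hs
    have hsW : s.map (Function.Embedding.subtype _) ⊆ W := fun A hA => by
      obtain ⟨a, -, rfl⟩ := mem_map.1 hA
      exact a.2
    have hshade : levelShade V l (s.map (Function.Embedding.subtype _)) = s.biUnion t := by
      ext L
      simp only [mem_levelShade, t, mem_biUnion, mem_filter, mem_powersetCard, mem_map]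
      aesop
    have hviol : IsHallViolator V l (s.map (Function.Embedding.subtype _)) :=
      ⟨fun A hA => hWV A (hsW hA), fun A hA => hWl A (hsW hA), by rwa [hshade, card_map]⟩
    obtain ⟨Z, hZV, hZ, hframe⟩ := hviol.exists_isSingletonFrame hl
    exact hno Z hZV hZ (hframe.mono hsW)
  obtain ⟨f, hf, hft⟩ := (all_card_le_biUnion_card_iff_exists_injective t).1 hall
  refine ⟨fun A => if hA : A ∈ W then f ⟨A, hA⟩ else ∅, fun A hA B hB hAB => ?_, fun A hA => ?_⟩
  · simp only [mem_coe] at hA hB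
    simp only [dif_pos hA, dif_pos hB] at hAB
    exact congrArg Subtype.val (hf hAB)
  · have := hft ⟨A, hA⟩
    simp only [t, mem_filter] at this
    simpa [dif_pos hA] using this.symm

theorem exists_injOn_subset_of_forall_not_isSingletonFrame (hl : l ≤ V.card)
    {W : Finset (Finset α)} (hWV : ∀ B ∈ W, B ⊆ V) (hWl : ∀ B ∈ W, l ≤ B.card)
    (hno : ∀ Z ⊆ V, Z.card + 1 = V.card - l → ¬IsSingletonFrame V Z (W.image (V \ ·))) :
    ∃ g : Finset α → Finset α, Set.InjOn g W ∧ ∀ B ∈ W, g B ⊆ B ∧ g B ∈ V.powersetCard l := by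
  have hcompl : ∀ A ∈ W.image (V \ ·), A.card ≤ V.card - l := by
    simp only [forall_mem_image]
    intro B hB
    rw [card_sdiff_of_subset (hWV B hB)]
    have := hWl B hB
    omega
  obtain ⟨f, hf, hfW⟩ :=
    exists_injOn_superset_of_forall_not_isSingletonFrame (by omega) (by simp) hcompl hno
  have hfV : ∀ B ∈ W, f (V \ B) ⊆ V := fun B hB =>
    (mem_powersetCard.1 (hfW _ (mem_image_of_mem _ hB)).2).1
  refine ⟨fun B => V \ f (V \ B), fun B hB B' hB' hBB' => ?_, fun B hB => ⟨?_, ?_⟩⟩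
  · simp only at hBB'
    have : f (V \ B) = f (V \ B') := by
      rw [← Finset.sdiff_sdiff_eq_self (hfV B hB), hBB', Finset.sdiff_sdiff_eq_self (hfV B' hB')]
    have := hf (mem_image_of_mem _ hB) (mem_image_of_mem _ hB') this
    rw [← Finset.sdiff_sdiff_eq_self (hWV B hB), this, Finset.sdiff_sdiff_eq_self (hWV B' hB')]
  · exact sdiff_le_comm.1 (hfW _ (mem_image_of_mem _ hB)).1
  · obtain ⟨-, hcard⟩ := mem_powersetCard.1 (hfW _ (mem_image_of_mem _ hB)).2
    rw [mem_powersetCard, card_sdiff_of_subset (hfV B hB), hcard]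
    exact ⟨sdiff_subset, by omega⟩

theorem card_le_choose_of_forall_not_isSingletonFrame (hl : l ≤ V.card)
    {𝓕 : Finset (Finset α)} (h𝓕V : ∀ A ∈ 𝓕, A ⊆ V)
    (hsmall : ∀ Z ⊆ V, Z.card + 1 = l → ¬IsSingletonFrame V Z {A ∈ 𝓕 | A.card ≤ l})
    (hlarge : ∀ Z ⊆ V, Z.card + 1 = V.card - l →
      ¬IsSingletonFrame V Z ({B ∈ 𝓕 | ¬B.card ≤ l}.image (V \ ·)))
    (hnest : ∀ A ∈ 𝓕, ∀ B ∈ 𝓕, A ⊆ B → A.card ≤ l → B.card ≤ l) :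
    𝓕.card ≤ V.card.choose l := by
  obtain ⟨f, hf, hfS⟩ := exists_injOn_superset_of_forall_not_isSingletonFrame (by omega)
    (fun A hA => h𝓕V A (mem_filter.1 hA).1) (fun A hA => (mem_filter.1 hA).2) hsmall
  obtain ⟨g, hg, hgL⟩ := exists_injOn_subset_of_forall_not_isSingletonFrame hl
    (fun B hB => h𝓕V B (mem_filter.1 hB).1) (fun B hB => by have := (mem_filter.1 hB).2; omega)
    hlarge
  -- `f A = g B` would give `A ⊆ f A = g B ⊆ B`
  have hdisj : Disjoint ({A ∈ 𝓕 | A.card ≤ l}.image f) ({B ∈ 𝓕 | ¬B.card ≤ l}.image g) := by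
    simp only [disjoint_left, mem_image, not_exists, not_and]
    rintro _ ⟨A, hA, rfl⟩ B hB hgf
    exact (mem_filter.1 hB).2 (hnest A (mem_filter.1 hA).1 B (mem_filter.1 hB).1
      ((hfS A hA).1.trans (hgf ▸ (hgL B hB).1)) (mem_filter.1 hA).2)
  calc 𝓕.card = {A ∈ 𝓕 | A.card ≤ l}.card + {B ∈ 𝓕 | ¬B.card ≤ l}.card :=
        (card_filter_add_card_filter_not _).symm
    _ = ({A ∈ 𝓕 | A.card ≤ l}.image f ∪ {B ∈ 𝓕 | ¬B.card ≤ l}.image g).card := by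
        rw [card_union_of_disjoint hdisj, card_image_of_injOn hf, card_image_of_injOn hg]
    _ ≤ (V.powersetCard l).card := card_le_card (union_subset
        (image_subset_iff.2 fun A hA => (hfS A hA).2) (image_subset_iff.2 fun B hB => (hgL B hB).2))
    _ = V.card.choose l := card_powersetCard l V

end Counting

/-- **Theorem 5.** If `H₁, …, H_m` are more than `(k+l).choose l` pairwise distinct
subsets of `[k+l]`, then the `(k+1)`-singleton matrix can be found among the sets of
size at most `l`, or the `(l+1)`-cosingleton matrix can be found among the sets of
size at least `l+1`, or some set of size at most `l` is contained in some set of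
size at least `l+1`. -/
theorem subsets_of_interval {k l m : ℕ} (H : Fin m → Set ℕ)
    (hinj : Function.Injective H) (hsub : ∀ i, H i ⊆ Set.Icc 1 (k + l))
    (hm : m > (k + l).choose l) :
    FoundIn (singletonMatrix (k + 1)) {S | (∃ i, H i = S) ∧ S.ncard ≤ l} ∨
    FoundIn (cosingletonMatrix (l + 1)) {S | (∃ i, H i = S) ∧ l + 1 ≤ S.ncard} ∨
    ∃ i j, i ≠ j ∧ H j ⊆ H i ∧ (H j).ncard ≤ l ∧ l + 1 ≤ (H i).ncard := by
  classical
  set V := Finset.Icc 1 (k + l)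
  have hV : V.card = k + l := by simp [V]
  let A : Fin m → Finset ℕ := fun i => {x ∈ V | x ∈ H i}
  have hA : ∀ i, (A i : Set ℕ) = H i := fun i => by
    ext x
    simpa [A, V] using fun hx => Set.mem_Icc.1 (hsub i hx)
  by_contra! ⟨hsmall, hlarge, hnest⟩
  simp only [← hA, Set.ncard_coe_finset, coe_subset] at hsmall hlarge hnest
  refine (card_le_choose_of_forall_not_isSingletonFrame (V := V) (l := l)
    (𝓕 := univ.image A) (by omega) ?_ ?_ ?_ ?_).not_gt ?_
  · simp [A]
  · refine fun Z hZV hZ hframe => hsmall (hframe.foundIn_singletonMatrix ?_ ?_)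
    · rw [card_sdiff_of_subset hZV]; omega
    · simp only [mem_filter, mem_image, mem_univ, true_and]
      rintro _ ⟨⟨i, rfl⟩, hi⟩
      exact ⟨⟨i, rfl⟩, by rwa [Set.ncard_coe_finset]⟩
  · refine fun Z hZV hZ hframe => hlarge (hframe.foundIn_cosingletonMatrix ?_ ?_)
    · rw [card_sdiff_of_subset hZV]; omega
    · simp only [mem_filter, mem_image, mem_univ, true_and]
      rintro _ ⟨_, ⟨⟨i, rfl⟩, hi⟩, rfl⟩
      rw [Finset.sdiff_sdiff_eq_self (filter_subset _ V)]
      exact ⟨⟨i, rfl⟩, by rw [Set.ncard_coe_finset]; exact not_le.1 hi⟩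
  · simp only [forall_mem_image, mem_univ, true_implies]
    intro i j hij hi
    by_contra hj
    exact (hnest j i (by rintro rfl; exact hj hi) hij hi).not_ge (by omega)
  · rwa [hV, card_image_of_injective _ fun i j h => hinj (by rw [← hA i, ← hA j, h]), card_univ,
      Fintype.card_fin]
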